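/- arXiv:0902.3784 — 2 statements merged into one kernel-verified Lean document; each statement's English description precedes it below -/
import Mathlib

section
/- Let μ > 1, 0 < α < 1 and c > 0 be real numbers, and let r : ℕ → ℝ be nonnegative with r(0) = 0 and r(n)·n^μ·α^n → c as n → ∞; set ρ := ∑_{n≥1} r(n)·α^n (a convergent series, assumed positive). Define δ₂(n) := ∑_{s+t+u=n} r(s)·r(t)·C(u+2, 2) and, for 1 ≤ x ≤ n, δ₂(n, x) := 2·r(x)·∑_{t=1}^{min(x, n−x)} r(t)·C(n − x − t + 2, 2). Then for each fixed integer a ≥ 1, with c_a := ∑_{i=1}^a C(a − i + 2, 2)·r(i), one has lim_{n→∞} δ₂(n, n − a)/δ₂(n) = (1−α)³·c_a·α^a/ρ. -/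
/-!
Put `R n = r n * α ^ n` and `Q u = C(u + 2, 2) * α ^ u`, so that `δ₂ n * α ^ n` is the threefold
Cauchy product `R * R * Q` and `R n * n ^ μ → c`. For summable real sequences with
`f n * n ^ μ → A` and `g n * n ^ μ → B` (`μ ≥ 0`) one has `(f * g) n * n ^ μ → A ∑ g + B ∑ f`:
split the convolution at `m = n / 2`; in each half the factor with index `≥ n / 2` carries the
weight `n ^ μ`, and dominated convergence for series passes to the limit. As `Q u * u ^ μ → 0`
and `∑ Q = (1 - α)⁻³`, this gives `δ₂ n * α ^ n * n ^ μ → 2 c ρ / (1 - α) ^ 3`. For `n ≥ 2a` the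
numerator is exactly `2 c_a r (n - a)`, whence `δ₂(n, n - a) * α ^ n * n ^ μ → 2 c_a α ^ a c`.
-/

open Filter Finset Topology

lemma tendsto_rpow_mul_pow_of_lt_one (s : ℝ) {α : ℝ} (hα0 : 0 < α) (hα1 : α < 1) :
    Tendsto (fun n : ℕ => (n : ℝ) ^ s * α ^ n) atTop (𝓝 0) := by
  have hb : 0 < -Real.log α := neg_pos.2 (Real.log_neg hα0 hα1)
  refine ((tendsto_rpow_mul_exp_neg_mul_atTop_nhds_zero s _ hb).comp
    tendsto_natCast_atTop_atTop).congr fun n => ?_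
  simp only [Function.comp, neg_neg, mul_comm (Real.log α), Real.exp_nat_mul, Real.exp_log hα0]

/-- Split `α ^ n = √α ^ n * √α ^ n`: one factor absorbs the binomial coefficient (a summable
series), the other absorbs `n ^ μ`. -/
lemma tendsto_choose_mul_pow_mul_rpow (k : ℕ) (μ : ℝ) {α : ℝ} (hα0 : 0 < α) (hα1 : α < 1) :
    Tendsto (fun n : ℕ => ((n + k).choose k : ℝ) * α ^ n * (n : ℝ) ^ μ) atTop (𝓝 0) := by
  set β := √α
  have hβ0 : 0 < β := Real.sqrt_pos.2 hα0
  have hβ1 : β < 1 := (Real.sqrt_lt' one_pos).2 (by simpa using hα1)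
  have hβ : β * β = α := Real.mul_self_sqrt hα0.le
  have hnorm : ‖β‖ < 1 := by rwa [Real.norm_of_nonneg hβ0.le]
  refine (mul_zero (0 : ℝ) ▸
    (summable_choose_mul_geometric_of_norm_lt_one k hnorm).tendsto_atTop_zero.mul
      (tendsto_rpow_mul_pow_of_lt_one μ hβ0 hβ1)).congr fun n => ?_
  rw [← hβ, mul_pow]
  ring

lemma summable_of_tendsto_mul_rpow {f : ℕ → ℝ} {μ A : ℝ} (hμ : 1 < μ)
    (hf : Tendsto (fun n => f n * (n : ℝ) ^ μ) atTop (𝓝 A)) : Summable f := by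
  refine summable_of_isBigO_nat (Real.summable_nat_rpow.2 (neg_lt_neg hμ))
    (((hf.isBigO_one ℝ).mul
      (Asymptotics.isBigO_refl (fun n : ℕ => (n : ℝ) ^ (-μ)) atTop)).congr' ?_ ?_)
  · filter_upwards [eventually_gt_atTop 0] with n hn
    rw [mul_assoc, ← Real.rpow_add (Nat.cast_pos.2 hn), add_neg_cancel, Real.rpow_zero, mul_one]
  · simp

lemma tendsto_comp_sub_mul_rpow {g : ℕ → ℝ} {μ B : ℝ}
    (hg : Tendsto (fun n => g n * (n : ℝ) ^ μ) atTop (𝓝 B)) (m : ℕ) :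
    Tendsto (fun n => g (n - m) * (n : ℝ) ^ μ) atTop (𝓝 B) := by
  have hratio : Tendsto (fun n : ℕ => (1 + (m : ℝ) / n) ^ μ) atTop (𝓝 1) := by
    simpa using ((tendsto_const_div_atTop_nhds_zero_nat (m : ℝ)).const_add 1).rpow_const
      (Or.inl (by norm_num))
  have hadd : Tendsto (fun n => g n * ((n + m : ℕ) : ℝ) ^ μ) atTop (𝓝 B) := by
    refine (mul_one B ▸ hg.mul hratio).congr' ?_
    filter_upwards [eventually_gt_atTop 0] with n hn
    have hn' : (0 : ℝ) < n := Nat.cast_pos.2 hn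
    rw [mul_assoc, ← Real.mul_rpow hn'.le (by positivity)]
    congr 2
    field_simp
    push_cast
    ring
  refine (hadd.comp (tendsto_sub_atTop_nat m)).congr' ?_
  filter_upwards [eventually_ge_atTop m] with n hn
  simp only [Function.comp_apply, Nat.sub_add_cancel hn]

lemma rpow_le_two_rpow_mul_sub {μ : ℝ} (hμ : 0 ≤ μ) {m n : ℕ} (h : 2 * m ≤ n) :
    (n : ℝ) ^ μ ≤ 2 ^ μ * ((n - m : ℕ) : ℝ) ^ μ := by
  rw [← Real.mul_rpow zero_le_two (Nat.cast_nonneg _)]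
  refine Real.rpow_le_rpow (Nat.cast_nonneg _) ?_ hμ
  rw [Nat.cast_sub (by omega)]
  have : (2 * m : ℝ) ≤ n := by exact_mod_cast h
  linarith

/-- Tannery's theorem: on `2 * m ≤ n` the weight `n ^ μ` is at most `2 ^ μ` times `(n - m) ^ μ`,
so the terms are dominated by a multiple of `‖f m‖`. -/
lemma tendsto_sum_filter_two_mul_add_le {f g : ℕ → ℝ} {μ B : ℝ} (hμ : 0 ≤ μ) (hf : Summable f)
    (hg : Tendsto (fun n => g n * (n : ℝ) ^ μ) atTop (𝓝 B)) (k : ℕ) :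
    Tendsto (fun n => ∑ m ∈ range (n + 1) with 2 * m + k ≤ n, f m * g (n - m) * (n : ℝ) ^ μ)
      atTop (𝓝 ((∑' m, f m) * B)) := by
  obtain ⟨M, hM⟩ := hg.norm.bddAbove_range
  set F : ℕ → ℕ → ℝ := fun n m =>
    if 2 * m + k ≤ n then f m * (g (n - m) * (n : ℝ) ^ μ) else 0
  have hF : ∀ n, ∑ m ∈ range (n + 1) with 2 * m + k ≤ n, f m * g (n - m) * (n : ℝ) ^ μ
      = ∑' m, F n m := by
    intro n
    rw [sum_filter, tsum_eq_sum (s := range (n + 1))]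
    · exact sum_congr rfl fun m _ => by simp only [F, mul_assoc]
    · intro m hm
      simp only [mem_range] at hm
      simp only [F, if_neg (show ¬ 2 * m + k ≤ n by omega)]
  have hlim : ∀ m, Tendsto (F · m) atTop (𝓝 (f m * B)) := fun m =>
    ((tendsto_comp_sub_mul_rpow hg m).const_mul (f m)).congr' <| by
      filter_upwards [eventually_ge_atTop (2 * m + k)] with n hn
      simp only [F, if_pos hn]
  have hbound : ∀ n m, ‖F n m‖ ≤ 2 ^ μ * M * ‖f m‖ := by
    intro n m
    have hM0 : 0 ≤ M := (norm_nonneg _).trans (hM (Set.mem_range_self 0))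
    by_cases h : 2 * m + k ≤ n
    · have hle := rpow_le_two_rpow_mul_sub hμ (show 2 * m ≤ n by omega)
      have hgM := hM (Set.mem_range_self (n - m))
      simp only [F, if_pos h, norm_mul,
        Real.norm_of_nonneg (Real.rpow_nonneg (Nat.cast_nonneg _) μ)] at hgM ⊢
      calc ‖f m‖ * (‖g (n - m)‖ * (n : ℝ) ^ μ)
          ≤ ‖f m‖ * (‖g (n - m)‖ * (2 ^ μ * ((n - m : ℕ) : ℝ) ^ μ)) := by gcongr
        _ = 2 ^ μ * (‖g (n - m)‖ * ((n - m : ℕ) : ℝ) ^ μ) * ‖f m‖ := by ring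
        _ ≤ 2 ^ μ * M * ‖f m‖ := by gcongr
    · simp only [F, if_neg h, norm_zero]
      positivity
  simp only [hF, ← tsum_mul_right]
  exact tendsto_tsum_of_dominated_convergence (hf.norm.mul_left _) hlim
    (Eventually.of_forall hbound)

def cauchyProduct (f g : ℕ → ℝ) (n : ℕ) : ℝ := ∑ m ∈ range (n + 1), f m * g (n - m)

lemma cauchyProduct_eq_sum_filter_add_sum_filter (f g : ℕ → ℝ) (n : ℕ) :
    cauchyProduct f g n = ∑ m ∈ range (n + 1) with 2 * m ≤ n, f m * g (n - m)
      + ∑ m ∈ range (n + 1) with 2 * m + 1 ≤ n, g m * f (n - m) := by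
  rw [cauchyProduct, ← sum_filter_add_sum_filter_not _ (fun m => 2 * m ≤ n)]
  congr 1
  refine sum_nbij' (n - ·) (n - ·) ?_ ?_ ?_ ?_ ?_ <;> intro m hm <;>
    simp only [mem_filter, mem_range] at hm ⊢ <;> try omega
  rw [Nat.sub_sub_self (by omega), mul_comm]

lemma tendsto_cauchyProduct_mul_rpow {f g : ℕ → ℝ} {μ A B : ℝ} (hμ : 0 ≤ μ)
    (hf : Summable f) (hg : Summable g)
    (hfA : Tendsto (fun n => f n * (n : ℝ) ^ μ) atTop (𝓝 A))
    (hgB : Tendsto (fun n => g n * (n : ℝ) ^ μ) atTop (𝓝 B)) :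
    Tendsto (fun n => cauchyProduct f g n * (n : ℝ) ^ μ) atTop
      (𝓝 ((∑' m, f m) * B + (∑' m, g m) * A)) := by
  refine ((tendsto_sum_filter_two_mul_add_le hμ hf hgB 0).add
    (tendsto_sum_filter_two_mul_add_le hμ hg hfA 1)).congr fun n => ?_
  simp only [cauchyProduct_eq_sum_filter_add_sum_filter, add_mul, sum_mul, add_zero]

lemma cauchyProduct_mul_pow (f g : ℕ → ℝ) (α : ℝ) (n : ℕ) :
    cauchyProduct (fun m => f m * α ^ m) (fun m => g m * α ^ m) n
      = cauchyProduct f g n * α ^ n := by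
  rw [cauchyProduct, cauchyProduct, sum_mul]
  refine sum_congr rfl fun m hm => ?_
  rw [← Nat.add_sub_of_le (mem_range_succ_iff.1 hm), pow_add, Nat.add_sub_cancel_left]
  ring

lemma hasSum_cauchyProduct {f g : ℕ → ℝ} (hf : Summable f) (hg : Summable g) :
    HasSum (cauchyProduct f g) ((∑' m, f m) * ∑' m, g m) :=
  hasSum_sum_range_mul_of_summable_norm hf.norm hg.norm

lemma sum_range_sum_range_mul_pow_eq_cauchyProduct (f g h : ℕ → ℝ) (α : ℝ) (n : ℕ) :
    (∑ s ∈ range (n + 1), ∑ t ∈ range (n - s + 1), f s * g t * h (n - s - t)) * α ^ n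
      = cauchyProduct (fun m => f m * α ^ m)
          (cauchyProduct (fun m => g m * α ^ m) fun m => h m * α ^ m) n := by
  rw [funext (cauchyProduct_mul_pow g h α), cauchyProduct_mul_pow]
  simp only [cauchyProduct, mul_sum, mul_assoc]

lemma tendsto_cauchyProduct_cauchyProduct_choose_mul_rpow {R : ℕ → ℝ} {μ α c : ℝ} (hμ : 1 < μ)
    (hα0 : 0 < α) (hα1 : α < 1) (hR : Tendsto (fun n => R n * (n : ℝ) ^ μ) atTop (𝓝 c)) :
    Tendsto (fun n => cauchyProduct R (cauchyProduct R fun u => ((u + 2).choose 2 : ℝ) * α ^ u) n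
      * (n : ℝ) ^ μ) atTop (𝓝 (2 * c * (∑' n, R n) / (1 - α) ^ 3)) := by
  have hRs : Summable R := summable_of_tendsto_mul_rpow hμ hR
  have hQ : HasSum (fun u => ((u + 2).choose 2 : ℝ) * α ^ u) (1 / (1 - α) ^ 3) :=
    hasSum_choose_mul_geometric_of_norm_lt_one 2 (by rwa [Real.norm_of_nonneg hα0.le])
  have hRQ := hasSum_cauchyProduct hRs hQ.summable
  have h := tendsto_cauchyProduct_mul_rpow (by linarith) hRs hRQ.summable hR
    (tendsto_cauchyProduct_mul_rpow (by linarith) hRs hQ.summable hR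
      (tendsto_choose_mul_pow_mul_rpow 2 μ hα0 hα1))
  rw [hRQ.tsum_eq, hQ.tsum_eq] at h
  convert h using 2
  ring

theorem stmt_12_general (μ α c : ℝ) (hμ : 1 < μ) (hα0 : 0 < α) (hα1 : α < 1) (hc : 0 < c)
    (r : ℕ → ℝ)
    (hasym : Tendsto (fun n : ℕ => r n * (n : ℝ) ^ μ * α ^ n) atTop (nhds c))
    (ρ : ℝ) (hρ : ρ = ∑' n : ℕ, r n * α ^ n) (hρpos : 0 < ρ)
    (δ₂ : ℕ → ℝ)
    (hδ₂ : ∀ n, δ₂ n = ∑ s ∈ Finset.range (n + 1), ∑ t ∈ Finset.range (n - s + 1),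
      r s * r t * (Nat.choose (n - s - t + 2) 2 : ℝ))
    (δ₂x : ℕ → ℕ → ℝ)
    (hδ₂x : ∀ n x, δ₂x n x = 2 * r x * ∑ t ∈ Finset.Icc 1 (min x (n - x)),
      r t * (Nat.choose (n - x - t + 2) 2 : ℝ))
    (a : ℕ)
    (ca : ℝ) (hca : ca = ∑ i ∈ Finset.Icc 1 a, (Nat.choose (a - i + 2) 2 : ℝ) * r i) :
    Tendsto (fun n => δ₂x n (n - a) / δ₂ n) atTop
      (nhds ((1 - α) ^ 3 * ca * α ^ a / ρ)) := by
  set R : ℕ → ℝ := fun n => r n * α ^ n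
  have hR : Tendsto (fun n => R n * (n : ℝ) ^ μ) atTop (𝓝 c) := hasym.congr fun n => by ring
  have hden : Tendsto (fun n => δ₂ n * α ^ n * (n : ℝ) ^ μ) atTop
      (𝓝 (2 * c * ρ / (1 - α) ^ 3)) := by
    rw [hρ]
    refine (tendsto_cauchyProduct_cauchyProduct_choose_mul_rpow hμ hα0 hα1 hR).congr fun n => ?_
    rw [hδ₂, sum_range_sum_range_mul_pow_eq_cauchyProduct r r (fun u => ((u + 2).choose 2 : ℝ))]
  have hnum_eq : ∀ n, 2 * a ≤ n → δ₂x n (n - a) = 2 * r (n - a) * ca := by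
    intro n hn
    rw [hδ₂x, hca, Nat.sub_sub_self (by omega : a ≤ n), min_eq_right (by omega)]
    exact congrArg _ (sum_congr rfl fun t _ => mul_comm _ _)
  have hnum : Tendsto (fun n => δ₂x n (n - a) * α ^ n * (n : ℝ) ^ μ) atTop
      (𝓝 (2 * ca * α ^ a * c)) := by
    refine ((tendsto_comp_sub_mul_rpow hR a).const_mul (2 * ca * α ^ a)).congr' ?_
    filter_upwards [eventually_ge_atTop (2 * a)] with n hn
    rw [hnum_eq n hn, ← Nat.sub_add_cancel (show a ≤ n by omega), pow_add, Nat.add_sub_cancel]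
    ring
  have h1α : 0 < 1 - α := by linarith
  have hlim := hnum.div hden (by positivity)
  rw [show 2 * ca * α ^ a * c / (2 * c * ρ / (1 - α) ^ 3) = (1 - α) ^ 3 * ca * α ^ a / ρ by
    field_simp] at hlim
  refine hlim.congr' ?_
  filter_upwards [eventually_gt_atTop 0] with n hn
  rw [Pi.div_apply, mul_assoc, mul_assoc, mul_div_mul_right _ _ (by positivity)]

theorem stmt_12 (μ α c : ℝ) (hμ : 1 < μ) (hα0 : 0 < α) (hα1 : α < 1) (hc : 0 < c)
    (r : ℕ → ℝ) (hr0 : r 0 = 0) (hrpos : ∀ n, 0 ≤ r n)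
    (hasym : Tendsto (fun n : ℕ => r n * (n : ℝ) ^ μ * α ^ n) atTop (nhds c))
    (ρ : ℝ) (hρ : ρ = ∑' n : ℕ, r n * α ^ n) (hρpos : 0 < ρ)
    (δ₂ : ℕ → ℝ)
    (hδ₂ : ∀ n, δ₂ n = ∑ s ∈ Finset.range (n + 1), ∑ t ∈ Finset.range (n - s + 1),
      r s * r t * (Nat.choose (n - s - t + 2) 2 : ℝ))
    (δ₂x : ℕ → ℕ → ℝ)
    (hδ₂x : ∀ n x, δ₂x n x = 2 * r x * ∑ t ∈ Finset.Icc 1 (min x (n - x)),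
      r t * (Nat.choose (n - x - t + 2) 2 : ℝ))
    (a : ℕ) (ha : 1 ≤ a)
    (ca : ℝ) (hca : ca = ∑ i ∈ Finset.Icc 1 a, (Nat.choose (a - i + 2) 2 : ℝ) * r i) :
    Tendsto (fun n => δ₂x n (n - a) / δ₂ n) atTop
      (nhds ((1 - α) ^ 3 * ca * α ^ a / ρ)) :=
  stmt_12_general μ α c hμ hα0 hα1 hc r hasym ρ hρ hρpos δ₂ hδ₂ δ₂x hδ₂x a ca hca
end

section
/- Let μ > 1, 0 < α < 1 and c > 0 be real numbers, let r : ℕ → ℝ satisfy r(0) = 0, r(n) > 0 and r(n+1) > r(n) for all n ≥ 1, and r(n)·n^μ·α^n → c as n → ∞, and fix a real γ with 0 < γ < 1. Let x : ℕ → ℕ satisfy x_n → ∞ and 2·x_n ≤ n for all n, and set A^{(n)}_i := C(n − x_n − i + 2, 2)·r(i) for 0 ≤ i ≤ x_n (with r(i) = 0 understood for negative arguments). Then limsup_{n→∞} [∑_{j=0}^{⌊n^γ⌋} A^{(n)}_{x_n − j}] / A^{(n)}_{x_n} ≤ 1/(1−α)³. -/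
/-!
Fix `β ∈ (α, 1)`. Since `r n / r (n + 1) → α < β`, the sequence `s n = r n * β ^ n` is eventually
increasing and tends to infinity, so for large `X` every earlier value `s i` is at most `s X`,
i.e. `r (X - j) ≤ β ^ j * r X`. Together with `C(m + j + 2, 2) ≤ C(j + 2, 2) * C(m + 2, 2)` this
bounds the term `A_{X - j}` by `C(j + 2, 2) * β ^ j * A_X`, and `∑ C(j + 2, 2) β ^ j = 1 / (1 - β)³`.
Letting `β ↓ α` gives the bound `1 / (1 - α)³`.
-/

open Filter Topology Finset

theorem Nat.choose_two_add_le_mul (m j : ℕ) :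
    (m + j + 2).choose 2 ≤ (j + 2).choose 2 * (m + 2).choose 2 := by
  have hm : (0 : ℝ) ≤ m := m.cast_nonneg
  have hj : (0 : ℝ) ≤ j := j.cast_nonneg
  have h : ((m + j + 2).choose 2 : ℝ) ≤ (j + 2).choose 2 * (m + 2).choose 2 := by
    simp only [Nat.cast_choose_two]
    push_cast
    nlinarith [mul_nonneg hm hj, mul_nonneg (mul_nonneg hm hj) hm,
      mul_nonneg (mul_nonneg hm hj) hj]
  exact_mod_cast h

theorem sum_range_choose_two_mul_pow_le {β : ℝ} (hβ0 : 0 ≤ β) (hβ1 : β < 1) (N : ℕ) :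
    ∑ j ∈ range N, ((j + 2).choose 2 : ℝ) * β ^ j ≤ 1 / (1 - β) ^ 3 :=
  sum_le_hasSum _ (fun j _ => by positivity)
    (hasSum_choose_mul_geometric_of_norm_lt_one 2 (by rwa [Real.norm_of_nonneg hβ0]))

theorem tendsto_div_succ_of_tendsto_mul_rpow_mul_pow {r : ℕ → ℝ} {μ α c : ℝ}
    (hα : α ≠ 0) (hc : c ≠ 0)
    (h : Tendsto (fun n : ℕ => r n * (n : ℝ) ^ μ * α ^ n) atTop (𝓝 c)) :
    Tendsto (fun n => r n / r (n + 1)) atTop (𝓝 α) := by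
  set f := fun n : ℕ => r n * (n : ℝ) ^ μ * α ^ n
  have hf : Tendsto (fun n => f n / f (n + 1)) atTop (𝓝 1) := by
    have := h.div (h.comp (tendsto_add_atTop_nat 1)) hc
    rwa [div_self hc] at this
  have hpow : Tendsto (fun n : ℕ => ((n : ℝ) / (n + 1)) ^ μ) atTop (𝓝 1) := by
    simpa using (tendsto_natCast_div_add_atTop (1 : ℝ)).rpow_const (Or.inl one_ne_zero)
  have hlim : Tendsto (fun n : ℕ => α * (f n / f (n + 1)) / ((n : ℝ) / (n + 1)) ^ μ) atTop
      (𝓝 α) := by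
    have := (hf.const_mul α).div hpow one_ne_zero
    rwa [mul_one, div_one] at this
  refine hlim.congr' ?_
  filter_upwards [eventually_ge_atTop 1, (h.comp (tendsto_add_atTop_nat 1)).eventually_ne hc]
    with n hn hf1
  have hn0 : (0 : ℝ) < n := by exact_mod_cast hn
  have hr1 : r (n + 1) ≠ 0 := fun h0 => hf1 (by simp [f, h0])
  rw [Real.div_rpow hn0.le (by positivity)]
  simp only [f, Nat.cast_add_one]
  have : (0 : ℝ) < (n : ℝ) ^ μ := Real.rpow_pos_of_pos hn0 μ
  have : (0 : ℝ) < ((n : ℝ) + 1) ^ μ := Real.rpow_pos_of_pos (by positivity) μ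
  field_simp
  ring

theorem tendsto_atTop_of_tendsto_div_succ {s : ℕ → ℝ} {ρ : ℝ}
    (hs : ∀ᶠ n in atTop, 0 < s n) (hρ : ρ < 1)
    (h : Tendsto (fun n => s n / s (n + 1)) atTop (𝓝 ρ)) :
    Tendsto s atTop atTop := by
  obtain ⟨q, hρq, hq1⟩ := exists_between (max_lt hρ one_pos)
  have hq0 : 0 < q := (le_max_right ρ 0).trans_lt hρq
  obtain ⟨M, hM⟩ := eventually_atTop.1
    (hs.and (h.eventually_le_const ((le_max_left ρ 0).trans_lt hρq)))
  refine (tendsto_add_atTop_iff_nat M).1 (tendsto_atTop_of_geom_le (hM (0 + M) le_add_self).1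
    (one_lt_inv₀ hq0 |>.2 hq1) fun k => ?_)
  have hk := (hM (k + M) le_add_self).2
  have hk1 := (hM (k + 1 + M) le_add_self).1
  rw [Nat.add_right_comm] at hk1
  rw [div_le_iff₀ hk1] at hk
  rw [Nat.add_right_comm, inv_mul_le_iff₀ hq0]
  exact hk

theorem eventually_forall_le_of_tendsto_atTop {s : ℕ → ℝ}
    (hmono : ∀ᶠ n in atTop, s n ≤ s (n + 1)) (htop : Tendsto s atTop atTop) :
    ∀ᶠ n in atTop, ∀ i ≤ n, s i ≤ s n := by
  obtain ⟨M, hM⟩ := eventually_atTop.1 hmono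
  have hmonoOn : MonotoneOn s (Set.Ici M) := monotoneOn_nat_Ici_of_le_succ hM
  filter_upwards [eventually_ge_atTop M,
    (eventually_all_finset (range M)).2 fun i _ => htop.eventually_ge_atTop (s i)]
    with n hn hbig i hi
  rcases lt_or_ge i M with hiM | hiM
  · exact hbig i (mem_range.2 hiM)
  · exact hmonoOn hiM (Set.mem_Ici.2 hn) hi

theorem eventually_forall_sub_le_pow_mul {r : ℕ → ℝ} {α β : ℝ} (hr0 : r 0 = 0)
    (hpos : ∀ᶠ n in atTop, 0 < r n)
    (hratio : Tendsto (fun n => r n / r (n + 1)) atTop (𝓝 α)) (hα : 0 ≤ α) (hαβ : α < β) :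
    ∀ᶠ X in atTop, ∀ j, r (X - j) ≤ β ^ j * r X := by
  have hβ : 0 < β := hα.trans_lt hαβ
  set s := fun n => r n * β ^ n
  have hs_pos : ∀ᶠ n in atTop, 0 < s n := hpos.mono fun n hn => mul_pos hn (pow_pos hβ n)
  have hs_ratio : Tendsto (fun n => s n / s (n + 1)) atTop (𝓝 (α / β)) := by
    refine (hratio.div_const β).congr' ?_
    filter_upwards [tendsto_add_atTop_nat 1 |>.eventually hpos] with n hn
    simp only [s, pow_succ]
    field_simp
  have hρ : α / β < 1 := (div_lt_one hβ).2 hαβ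
  have hs_mono : ∀ᶠ n in atTop, s n ≤ s (n + 1) := by
    filter_upwards [hs_ratio.eventually_le_const hρ, tendsto_add_atTop_nat 1 |>.eventually hs_pos]
      with n hn hn1
    rwa [div_le_one hn1] at hn
  filter_upwards [eventually_forall_le_of_tendsto_atTop hs_mono
    (tendsto_atTop_of_tendsto_div_succ hs_pos hρ hs_ratio), hpos] with X hX hrX j
  rcases le_or_gt j X with hj | hj
  · have hle : r (X - j) * β ^ (X - j) ≤ r X * β ^ j * β ^ (X - j) := by
      rw [mul_assoc, ← pow_add, Nat.add_sub_cancel' hj]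
      exact hX (X - j) (Nat.sub_le X j)
    rw [mul_comm (β ^ j)]
    exact le_of_mul_le_mul_right hle (pow_pos hβ _)
  · rw [Nat.sub_eq_zero_of_le hj.le, hr0]
    positivity

theorem sum_choose_sub_mul_le {r : ℕ → ℝ} {β : ℝ} (hβ0 : 0 ≤ β) (hβ1 : β < 1)
    (hr : ∀ i, 0 ≤ r i) {X : ℕ} (hX : ∀ j, r (X - j) ≤ β ^ j * r X) (m N : ℕ) :
    ∑ j ∈ range N, ((m - (X - j) + 2).choose 2 : ℝ) * r (X - j) ≤
      1 / (1 - β) ^ 3 * (((m - X + 2).choose 2 : ℝ) * r X) := by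
  set A := ((m - X + 2).choose 2 : ℝ) * r X
  have hA : 0 ≤ A := mul_nonneg (Nat.cast_nonneg _) (hr X)
  have hchoose (j : ℕ) :
      ((m - (X - j) + 2).choose 2 : ℝ) ≤ (j + 2).choose 2 * (m - X + 2).choose 2 := by
    exact_mod_cast (Nat.choose_le_choose 2 (by omega : m - (X - j) + 2 ≤ m - X + j + 2)).trans
      (Nat.choose_two_add_le_mul _ _)
  calc ∑ j ∈ range N, ((m - (X - j) + 2).choose 2 : ℝ) * r (X - j)
      ≤ ∑ j ∈ range N, ((j + 2).choose 2 : ℝ) * β ^ j * A := by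
        refine sum_le_sum fun j _ => ?_
        calc ((m - (X - j) + 2).choose 2 : ℝ) * r (X - j)
            ≤ ((j + 2).choose 2 * (m - X + 2).choose 2 : ℝ) * (β ^ j * r X) :=
              mul_le_mul (hchoose j) (hX j) (hr _) (by positivity)
          _ = ((j + 2).choose 2 : ℝ) * β ^ j * A := by ring
    _ = (∑ j ∈ range N, ((j + 2).choose 2 : ℝ) * β ^ j) * A := (sum_mul _ _ _).symm
    _ ≤ 1 / (1 - β) ^ 3 * A :=
        mul_le_mul_of_nonneg_right (sum_range_choose_two_mul_pow_le hβ0 hβ1 N) hA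

theorem stmt_16_general (μ α c : ℝ) (hα0 : 0 < α) (hα1 : α < 1) (hc : 0 < c)
    (r : ℕ → ℝ) (hr0 : r 0 = 0) (hrpos : ∀ n, 1 ≤ n → 0 < r n)
    (hasym : Tendsto (fun n : ℕ => r n * (n : ℝ) ^ μ * α ^ n) atTop (nhds c))
    (γ : ℝ)
    (x : ℕ → ℕ) (hx : Tendsto x atTop atTop)
    (A : ℕ → ℕ → ℝ)
    (hA : ∀ n i, A n i = (Nat.choose (n - x n - i + 2) 2 : ℝ) * r i) :
    atTop.limsup
        (fun n : ℕ =>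
          (∑ j ∈ Finset.range (⌊(n : ℝ) ^ γ⌋₊ + 1), A n (x n - j)) / A n (x n)) ≤
      1 / (1 - α) ^ 3 := by
  have hr (n : ℕ) : 0 ≤ r n := n.eq_zero_or_pos.elim (· ▸ hr0.ge) fun h => (hrpos n h).le
  have hA0 (n i : ℕ) : 0 ≤ A n i := by rw [hA]; exact mul_nonneg (Nat.cast_nonneg _) (hr i)
  have hratio := tendsto_div_succ_of_tendsto_mul_rpow_mul_pow hα0.ne' hc.ne' hasym
  have hbound : ∀ β ∈ Set.Ioo α 1, atTop.limsup
      (fun n : ℕ => (∑ j ∈ range (⌊(n : ℝ) ^ γ⌋₊ + 1), A n (x n - j)) / A n (x n)) ≤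
        1 / (1 - β) ^ 3 := by
    rintro β ⟨hαβ, hβ1⟩
    refine limsup_le_of_le (isCoboundedUnder_le_of_le atTop fun n =>
      div_nonneg (sum_nonneg fun j _ => hA0 n _) (hA0 n _)) ?_
    have hsub := eventually_forall_sub_le_pow_mul hr0 (eventually_atTop.2 ⟨1, hrpos⟩) hratio
      hα0.le hαβ
    filter_upwards [hx.eventually hsub, hx.eventually_ge_atTop 1] with n hn hn1
    have hpos : 0 < A n (x n) := by
      rw [hA]
      exact mul_pos (by exact_mod_cast Nat.choose_pos (by omega)) (hrpos _ hn1)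
    rw [div_le_iff₀ hpos]
    simp only [hA]
    exact sum_choose_sub_mul_le (hα0.trans hαβ).le hβ1 hr hn _ _
  have hcont : ContinuousAt (fun β : ℝ => 1 / (1 - β) ^ 3) α := by
    fun_prop (disch := exact pow_ne_zero 3 (sub_ne_zero.2 hα1.ne'))
  exact ge_of_tendsto (hcont.tendsto.mono_left nhdsWithin_le_nhds)
    (eventually_of_mem (Ioo_mem_nhdsGT hα1) hbound)

theorem stmt_16 (μ α c : ℝ) (hμ : 1 < μ) (hα0 : 0 < α) (hα1 : α < 1) (hc : 0 < c)
    (r : ℕ → ℝ) (hr0 : r 0 = 0) (hrpos : ∀ n, 1 ≤ n → 0 < r n)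
    (hrmono : ∀ n, 1 ≤ n → r n < r (n + 1))
    (hasym : Tendsto (fun n : ℕ => r n * (n : ℝ) ^ μ * α ^ n) atTop (nhds c))
    (γ : ℝ) (hγ0 : 0 < γ) (hγ1 : γ < 1)
    (x : ℕ → ℕ) (hx : Tendsto x atTop atTop) (hx2 : ∀ n, 2 * x n ≤ n)
    (A : ℕ → ℕ → ℝ)
    (hA : ∀ n i, A n i = (Nat.choose (n - x n - i + 2) 2 : ℝ) * r i) :
    atTop.limsup
        (fun n : ℕ =>
          (∑ j ∈ Finset.range (⌊(n : ℝ) ^ γ⌋₊ + 1), A n (x n - j)) / A n (x n)) ≤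
      1 / (1 - α) ^ 3 :=
  stmt_16_general μ α c hα0 hα1 hc r hr0 hrpos hasym γ x hx A hA
end
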